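/- Let L be a Lie algebra over ℚ and K = (E ⊗_ℚ L)/N a completion with N entangled. Then for every n, K^{(n)} = (E ⊗_ℚ L^{(n)} + N)/N, i.e., the n-th derived subalgebra of K is the image of E ⊗_ℚ L^{(n)}. -/

import Mathlib

open scoped TensorProduct

/-!
The quotient map onto `K` is a surjective morphism of Lie algebras, so it carries the derived
series of `E ⊗_ℚ L` onto that of `K`; and the derived series commutes with extension of scalars,
so `(E ⊗_ℚ L)^{(n)} = E ⊗_ℚ L^{(n)}`.
-/

namespace LieIdeal

variable {R L : Type*} [CommRing R] [LieRing L] [LieAlgebra R L]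

def mkQ (I : LieIdeal R L) : L →ₗ⁅R⁆ L ⧸ I :=
  { (I : Submodule R L).mkQ with map_lie' := rfl }

lemma mkQ_surjective (I : LieIdeal R L) : Function.Surjective I.mkQ :=
  Submodule.Quotient.mk_surjective _

lemma coe_derivedSeries_eq_image {L' : Type*} [LieRing L'] [LieAlgebra R L']
    {f : L →ₗ⁅R⁆ L'} (hf : Function.Surjective f) (n : ℕ) :
    (LieAlgebra.derivedSeries R L' n : Set L') = f '' LieAlgebra.derivedSeries R L n := by
  rw [← derivedSeries_map_eq n hf, ← LieSubmodule.coe_toSubmodule, coe_map_of_surjective hf,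
    Submodule.map_coe]
  rfl

end LieIdeal

theorem derivedSeries_of_completion_general
    (E L : Type) [Field E] [CharZero E] [LieRing L] [LieAlgebra ℚ L]
    (N : LieIdeal E (E ⊗[ℚ] L)) (n : ℕ) :
    ((LieAlgebra.derivedSeries E ((E ⊗[ℚ] L) ⧸ N) n :
        LieIdeal E ((E ⊗[ℚ] L) ⧸ N)) : Set ((E ⊗[ℚ] L) ⧸ N)) =
      (LieSubmodule.Quotient.mk (N := N)) ''
        (LinearMap.range (TensorProduct.map (LinearMap.id : E →ₗ[ℚ] E)
          ((LieAlgebra.derivedSeries ℚ L n : LieIdeal ℚ L) : Submodule ℚ L).subtype) :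
            Set (E ⊗[ℚ] L)) := by
  rw [LieIdeal.coe_derivedSeries_eq_image N.mkQ_surjective, LieAlgebra.derivedSeries_baseChange]
  -- `Submodule.baseChange E p` is defined as the range of `TensorProduct.map id p.subtype`.
  rfl

/-- For a completion `K = (E ⊗_ℚ L) ⧸ N` of the rational Lie algebra `L` by an entangled
ideal `N`, the `n`-th derived subalgebra of `K` is the image of `E ⊗_ℚ L^{(n)}` in the
quotient, i.e. `K^{(n)} = (E ⊗_ℚ L^{(n)} + N) / N`. -/
theorem derivedSeries_of_completion
    (E L : Type) [Field E] [CharZero E] [LieRing L] [LieAlgebra ℚ L]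
    (N : LieIdeal E (E ⊗[ℚ] L))
    (hN : ∀ a : L, (1 : E) ⊗ₜ[ℚ] a ∈ N → a = 0) (n : ℕ) :
    ((LieAlgebra.derivedSeries E ((E ⊗[ℚ] L) ⧸ N) n :
        LieIdeal E ((E ⊗[ℚ] L) ⧸ N)) : Set ((E ⊗[ℚ] L) ⧸ N)) =
      (LieSubmodule.Quotient.mk (N := N)) ''
        (LinearMap.range (TensorProduct.map (LinearMap.id : E →ₗ[ℚ] E)
          ((LieAlgebra.derivedSeries ℚ L n : LieIdeal ℚ L) : Submodule ℚ L).subtype) :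
            Set (E ⊗[ℚ] L)) :=
  derivedSeries_of_completion_general E L N n
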